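/- arXiv:2309.12436 — 4 statements merged into one kernel-verified Lean document; each statement's English description precedes it below -/
import Mathlib

section
/- Let T be a type, α a linearly ordered type, P : T → T → Prop a symmetric binary predicate (i.e., ∀ s t, P s t ↔ P t s), f : T → α, and r : Fin n → T a relation whose rows are indexed by Fin n (distinct indices represent distinct rows under bag semantics). Then the denial constraint with a disequality predicate holds, i.e. (∀ i j, i ≠ j → ¬(P (r i) (r j) ∧ f (r i) ≠ f (r j))), if and only if the denial constraint with a single strict-inequality predicate holds, i.e. (∀ i j, i ≠ j → ¬(P (r i) (r j) ∧ f (r i) < f (r j))). -/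
/-
Both sides say that `f ∘ r` is constant along the symmetric relation "distinct rows related
by `P`": forbidding `f (r i) < f (r j)` on every ordered pair also forbids the reverse
inequality, because the swapped pair is again related.
-/

theorem forall_eq_iff_forall_le_of_symm {ι α : Type*} [LinearOrder α] {R : ι → ι → Prop}
    (hR : ∀ i j, R i j → R j i) (g : ι → α) :
    (∀ i j, R i j → g i = g j) ↔ ∀ i j, R i j → g j ≤ g i :=
  ⟨fun h i j hij => (h i j hij).ge,
    fun h i j hij => le_antisymm (h j i (hR i j hij)) (h i j hij)⟩

/-- A homogeneous DC with a symmetric predicate `P` and one disequality predicate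
holds iff the DC with the disequality replaced by a single strict inequality holds. -/
theorem dc_diseq_iff_lt {T α : Type*} [LinearOrder α] {n : ℕ}
    (P : T → T → Prop) (hP : ∀ s t, P s t ↔ P t s)
    (f : T → α) (r : Fin n → T) :
    (∀ i j, i ≠ j → ¬(P (r i) (r j) ∧ f (r i) ≠ f (r j))) ↔
    (∀ i j, i ≠ j → ¬(P (r i) (r j) ∧ f (r i) < f (r j))) := by
  have hR : ∀ i j, i ≠ j ∧ P (r i) (r j) → j ≠ i ∧ P (r j) (r i) :=
    fun i j ⟨hij, hp⟩ => ⟨hij.symm, (hP _ _).mp hp⟩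
  simpa only [not_and, not_not, not_lt, and_imp, Function.comp_apply] using
    forall_eq_iff_forall_le_of_symm hR (f ∘ r)
end

section
/- Let T be a type, α a linearly ordered type, P : T → T → Prop a symmetric binary predicate (∀ s t, P s t ↔ P t s), f : Fin (ℓ+1) → T → α a family of ℓ+1 attribute projections, and r : Fin n → T a relation. Then the denial constraint (∀ i j, i ≠ j → ¬(P (r i) (r j) ∧ ∀ k : Fin (ℓ+1), f k (r i) ≠ f k (r j))) holds on r if and only if all 2^ℓ denial constraints obtained by replacing each of the first ℓ disequalities by a strict inequality in one of the two directions and the last disequality by < hold on r; that is, if and only if for every sign pattern ε : Fin ℓ → Bool, (∀ i j, i ≠ j → ¬(P (r i) (r j) ∧ (∀ k : Fin ℓ, if ε k then f k.castSucc (r i) < f k.castSucc (r j) else f k.castSucc (r j) < f k.castSucc (r i)) ∧ f (Fin.last ℓ) (r i) < f (Fin.last ℓ) (r j))). -/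
/-!
A pair `i ≠ j` violating the disequality constraint has pairwise distinct attribute values. Since
the predicate is symmetric, the pair may be swapped so that the last attribute increases from `i`
to `j`; the directions of the first `ℓ` comparisons then form the sign pattern of a violated
inequality constraint. Conversely, every strict inequality is a disequality.
-/

section SignPattern

variable {ι α : Type*} [LinearOrder α]

theorem ne_of_ite_lt {e : Bool} {a b : α} (h : if e then a < b else b < a) : a ≠ b := by
  split at h
  exacts [h.ne, h.ne']

theorem ite_decide_lt_of_ne {a b : α} (h : a ≠ b) :
    if decide (a < b) then a < b else b < a := by
  by_cases hab : a < b
  · simp [hab]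
  · simpa [hab] using h.lt_or_gt.resolve_left hab

theorem forall_ne_iff_exists_ite_lt {a b : ι → α} :
    (∀ k, a k ≠ b k) ↔ ∃ ε : ι → Bool, ∀ k, if ε k then a k < b k else b k < a k :=
  ⟨fun h => ⟨fun k => decide (a k < b k), fun k => ite_decide_lt_of_ne (h k)⟩,
    fun ⟨_, h⟩ k => ne_of_ite_lt (h k)⟩

theorem forall_not_and_ne_iff_forall_not_and_lt
    {Q : ι → ι → Prop} (hQ : ∀ i j, Q i j ↔ Q j i) (g : ι → α) :
    (∀ i j, i ≠ j → ¬(Q i j ∧ g i ≠ g j)) ↔ (∀ i j, i ≠ j → ¬(Q i j ∧ g i < g j)) := by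
  refine ⟨fun h i j hij ⟨hq, hlt⟩ => h i j hij ⟨hq, hlt.ne⟩, fun h i j hij ⟨hq, hne⟩ => ?_⟩
  rcases hne.lt_or_gt with hlt | hgt
  · exact h i j hij ⟨hq, hlt⟩
  · exact h j i hij.symm ⟨(hQ i j).mp hq, hgt⟩

end SignPattern

/-- A homogeneous DC with a symmetric predicate `P` and `ℓ+1` disequality predicates
holds iff the `2^ℓ` DCs obtained by replacing the first `ℓ` disequalities by strict
inequalities in either direction and the last one by `<` all hold. -/
theorem dc_diseq_iff_signPatterns {T α : Type*} [LinearOrder α] {n ℓ : ℕ}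
    (P : T → T → Prop) (hP : ∀ s t, P s t ↔ P t s)
    (f : Fin (ℓ + 1) → T → α) (r : Fin n → T) :
    (∀ i j, i ≠ j → ¬(P (r i) (r j) ∧ ∀ k : Fin (ℓ + 1), f k (r i) ≠ f k (r j))) ↔
    (∀ ε : Fin ℓ → Bool, ∀ i j, i ≠ j →
      ¬(P (r i) (r j) ∧
        (∀ k : Fin ℓ, if ε k then f k.castSucc (r i) < f k.castSucc (r j)
          else f k.castSucc (r j) < f k.castSucc (r i)) ∧
        f (Fin.last ℓ) (r i) < f (Fin.last ℓ) (r j))) := by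
  let Q i j := P (r i) (r j) ∧ ∀ k : Fin ℓ, f k.castSucc (r i) ≠ f k.castSucc (r j)
  have hQ : ∀ i j, Q i j ↔ Q j i := fun i j =>
    and_congr (hP _ _) (forall_congr' fun _ => ne_comm)
  calc _ ↔ ∀ i j, i ≠ j → ¬(Q i j ∧ f (Fin.last ℓ) (r i) ≠ f (Fin.last ℓ) (r j)) := by
        simp only [Q, Fin.forall_fin_succ', and_assoc]
    _ ↔ ∀ i j, i ≠ j → ¬(Q i j ∧ f (Fin.last ℓ) (r i) < f (Fin.last ℓ) (r j)) :=
        forall_not_and_ne_iff_forall_not_and_lt hQ _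
    _ ↔ _ := by
        simp only [Q, forall_ne_iff_exists_ite_lt, not_and, and_imp, forall_exists_index]
        exact ⟨fun h ε i j hij hp hε => h i j hij hp ε hε,
          fun h i j hij hp ε hε => h ε i j hij hp hε⟩
end

section
/- Let T be a type, p : Fin m → T → T → Prop a family of predicates, Q : T → T → Prop, k₀ : Fin m, and r : Fin n → T a relation. Suppose the denial constraint ¬(p₀ ∧ … ∧ p_{m−1}) holds on r, i.e., ∀ i j, i ≠ j → ¬(∀ k, p k (r i) (r j)). Then the denial constraint (∀ i j, i ≠ j → ¬((∀ k ≠ k₀, p k (r i) (r j)) ∧ ¬ p k₀ (r i) (r j) ∧ Q (r i) (r j))) holds on r if and only if the denial constraint (∀ i j, i ≠ j → ¬((∀ k ≠ k₀, p k (r i) (r j)) ∧ Q (r i) (r j))) holds on r. -/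
theorem not_apply_of_not_forall_of_forall_ne {ι : Type*} {P : ι → Prop} {k₀ : ι}
    (hall : ¬∀ k, P k) (hne : ∀ k, k ≠ k₀ → P k) : ¬P k₀ := by
  intro hk₀
  refine hall fun k => ?_
  by_cases hk : k = k₀
  · exact hk ▸ hk₀
  · exact hne k hk

theorem not_and_not_and_iff_not_and {a b c : Prop} (hab : a → ¬b) :
    ¬(a ∧ ¬b ∧ c) ↔ ¬(a ∧ c) := by
  constructor
  · rintro h ⟨ha, hc⟩
    exact h ⟨ha, hab ha, hc⟩
  · rintro h ⟨ha, -, hc⟩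
    exact h ⟨ha, hc⟩

/-- Soundness of the pruning rule: if the DC `¬(⋀ k, p k)` holds on `r`, then the
candidate DC containing `{p k}_{k ≠ k₀}`, the negated predicate `¬ p k₀`, and extra
predicates `Q` is equivalent on `r` to the DC obtained by dropping `¬ p k₀`. -/
theorem pruning_sound {T : Type*} {m n : ℕ}
    (p : Fin m → T → T → Prop) (Q : T → T → Prop) (k₀ : Fin m) (r : Fin n → T)
    (h : ∀ i j, i ≠ j → ¬(∀ k, p k (r i) (r j))) :
    (∀ i j, i ≠ j →
        ¬((∀ k, k ≠ k₀ → p k (r i) (r j)) ∧ ¬ p k₀ (r i) (r j) ∧ Q (r i) (r j))) ↔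
    (∀ i j, i ≠ j → ¬((∀ k, k ≠ k₀ → p k (r i) (r j)) ∧ Q (r i) (r j))) :=
  forall₃_congr fun i j hij =>
    not_and_not_and_iff_not_and (not_apply_of_not_forall_of_forall_ne (h i j hij))
end

section
/- Let A be an attribute type, α a linearly ordered type, E : Finset A, f g : (A → α) → α, and r : Fin n → (A → α) a relation. For indices i, j, write i ~ j when ∀ a ∈ E, r i a = r j a (same equality-partition). Then there exist indices i ≠ j with i ~ j and f (r i) < g (r j) — i.e., a violation of the denial constraint ∀ s ≠ t, ¬((∀ a ∈ E, s a = t a) ∧ f s < g t) — if and only if there exists an index j such that the set S_j := {i : Fin n | i < j ∧ i ~ j} of earlier same-partition indices is nonempty and either (the minimum of f ∘ r over S_j) < g (r j) or f (r j) < (the maximum of g ∘ r over S_j). -/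
/-! A violating pair of rows, ordered by index, is seen when its later row is processed: if the
earlier row plays `s`, the running minimum of `f` detects it; if it plays `t`, the running maximum
of `g` does. -/

theorem Finset.exists_inf'_lt_or_lt_sup'_iff {ι α : Type*} [LinearOrder α] {s : Finset ι}
    {F G : ι → α} {a b : α} :
    (∃ hne : s.Nonempty, s.inf' hne F < a ∨ b < s.sup' hne G) ↔
      ∃ i ∈ s, F i < a ∨ b < G i := by
  constructor
  · rintro ⟨hne, hinf | hsup⟩
    · obtain ⟨i, hi, hlt⟩ := (Finset.inf'_lt_iff hne).1 hinf
      exact ⟨i, hi, .inl hlt⟩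
    · obtain ⟨i, hi, hlt⟩ := (Finset.lt_sup'_iff hne).1 hsup
      exact ⟨i, hi, .inr hlt⟩
  · rintro ⟨i, hi, h⟩
    exact ⟨⟨i, hi⟩, h.imp (Finset.inf'_le F hi).trans_lt (·.trans_le (Finset.le_sup' G hi))⟩

theorem exists_ne_rel_lt_iff_exists_lt_rel {ι α : Type*} [LinearOrder ι] [LT α]
    {R : ι → ι → Prop} (hR : Std.Symm R) {F G : ι → α} :
    (∃ i j, i ≠ j ∧ R i j ∧ F i < G j) ↔
      ∃ j i, i < j ∧ R i j ∧ (F i < G j ∨ F j < G i) := by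
  constructor
  · rintro ⟨i, j, hij, hR_ij, hlt⟩
    rcases hij.lt_or_gt with hij | hji
    · exact ⟨j, i, hij, hR_ij, .inl hlt⟩
    · exact ⟨i, j, hji, hR.symm _ _ hR_ij, .inr hlt⟩
  · rintro ⟨j, i, hij, hR_ij, hlt | hlt⟩
    · exact ⟨i, j, hij.ne, hR_ij, hlt⟩
    · exact ⟨j, i, hij.ne', hR.symm _ _ hR_ij, hlt⟩

/-- Correctness of the linear-time verification algorithm for a DC with equality
predicates over `E` and one inequality predicate `f s < g t`: a violation exists iff,
when some row `j` is processed, the set of earlier rows in the same equality-partition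
is nonempty and either its running minimum of `f` is below `g (r j)` or `f (r j)` is
below its running maximum of `g`. -/
theorem one_inequality_dc_correct {A α : Type*} [LinearOrder α] {n : ℕ}
    (E : Finset A) (f g : (A → α) → α) (r : Fin n → A → α) :
    (∃ i j, i ≠ j ∧ (∀ a ∈ E, r i a = r j a) ∧ f (r i) < g (r j)) ↔
    (∃ j : Fin n, ∃ hne :
        (Finset.univ.filter (fun i => i < j ∧ ∀ a ∈ E, r i a = r j a)).Nonempty,
      ((Finset.univ.filter (fun i => i < j ∧ ∀ a ∈ E, r i a = r j a)).inf' hne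
          (fun i => f (r i)) < g (r j) ∨
       f (r j) < (Finset.univ.filter (fun i => i < j ∧ ∀ a ∈ E, r i a = r j a)).sup' hne
          (fun i => g (r i)))) := by
  have hsymm : Std.Symm fun i j : Fin n => ∀ a ∈ E, r i a = r j a :=
    ⟨fun _ _ h a ha => (h a ha).symm⟩
  rw [exists_ne_rel_lt_iff_exists_lt_rel hsymm]
  simp only [Finset.exists_inf'_lt_or_lt_sup'_iff, Finset.mem_filter, Finset.mem_univ, true_and,
    and_assoc]
end
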